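/- arXiv:1409.6165 — 6 statements merged into one kernel-verified Lean document; each statement's English description precedes it below -/
import Mathlib

section
/- If u and v are twins in a graph G (i.e., u ≠ v, u and v are non-adjacent, and they have the same neighborhoods), then bc(G) = bc(G − u), where G − u is the graph obtained by deleting vertex u. -/
def SimpleGraph.IsBicliquePartition {V : Type*} (G : SimpleGraph V) {m : ℕ}
    (A B : Fin m → Finset V) : Prop :=
  (∀ i, Disjoint (A i) (B i)) ∧
  (∀ i, ∀ a ∈ A i, ∀ b ∈ B i, G.Adj a b) ∧
  (∀ e ∈ G.edgeSet, ∃! i : Fin m, ∃ a ∈ A i, ∃ b ∈ B i, e = s(a, b))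

noncomputable def SimpleGraph.bcNum {V : Type*} [Fintype V] (G : SimpleGraph V) : ℕ :=
  sInf {m | ∃ A B : Fin m → Finset V, G.IsBicliquePartition A B}

/-!
Each of `G - u` and `G` is a pullback of the other: `G - u` is `G` pulled back along the
inclusion, and, since twins are interchangeable, `G` is `G - u` pulled back along the retraction
sending `u` to `v`. A biclique partition pulls back along any map to one with the same number of
bicliques (take preimages of the sides), so both graphs admit biclique partitions of exactly the
same sizes.
-/

namespace SimpleGraph

variable {V W : Type*}

theorem IsBicliquePartition.comap [Fintype V] [DecidableEq W] {H : SimpleGraph W} {m : ℕ}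
    {A B : Fin m → Finset W} (h : H.IsBicliquePartition A B) (f : V → W) :
    (H.comap f).IsBicliquePartition (fun i => {a | f a ∈ A i}) (fun i => {b | f b ∈ B i}) := by
  obtain ⟨hdisj, hadj, hcover⟩ := h
  refine ⟨fun i => ?_, fun i a ha b hb => ?_, ?_⟩
  · simp only [Finset.disjoint_left, Finset.mem_filter, Finset.mem_univ, true_and]
    exact fun _ ha hb => Finset.disjoint_left.mp (hdisj i) ha hb
  · simp only [Finset.mem_filter, Finset.mem_univ, true_and] at ha hb
    exact hadj i _ ha _ hb
  · intro e he
    induction e using Sym2.ind with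
    | _ a b =>
      have hcovered : ∀ i, (∃ a' ∈ ({a | f a ∈ A i} : Finset V),
            ∃ b' ∈ ({b | f b ∈ B i} : Finset V), s(a, b) = s(a', b')) ↔
          ∃ x ∈ A i, ∃ y ∈ B i, s(f a, f b) = s(x, y) := by
        intro i
        simp only [Finset.mem_filter, Finset.mem_univ, true_and]
        constructor
        · rintro ⟨a', ha', b', hb', hab⟩
          exact ⟨f a', ha', f b', hb', by simpa using congrArg (Sym2.map f) hab⟩
        · rintro ⟨x, hx, y, hy, hxy⟩
          rcases Sym2.eq_iff.mp hxy with ⟨rfl, rfl⟩ | ⟨rfl, rfl⟩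
          · exact ⟨a, hx, b, hy, rfl⟩
          · exact ⟨b, hx, a, hy, Sym2.eq_swap⟩
      exact (existsUnique_congr hcovered).mpr (hcover s(f a, f b) he)

theorem exists_isBicliquePartition_comap [Fintype V] [DecidableEq W] {H : SimpleGraph W}
    {m : ℕ} (f : V → W) (h : ∃ A B : Fin m → Finset W, H.IsBicliquePartition A B) :
    ∃ A B : Fin m → Finset V, (H.comap f).IsBicliquePartition A B :=
  let ⟨_, _, hAB⟩ := h
  ⟨_, _, hAB.comap f⟩

def retractTo [DecidableEq V] {u v : V} (hvu : v ≠ u) (w : V) : {w : V | w ≠ u} :=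
  if hw : w = u then ⟨v, hvu⟩ else ⟨w, hw⟩

theorem comap_retractTo_induce_of_neighborSet_eq [DecidableEq V] (G : SimpleGraph V) {u v : V}
    (hvu : v ≠ u) (htwin : G.neighborSet u = G.neighborSet v) :
    (G.induce {w | w ≠ u}).comap (retractTo hvu) = G := by
  have hN (w : V) : G.Adj u w ↔ G.Adj v w := Set.ext_iff.mp htwin w
  ext a b
  simp only [comap_adj, retractTo]
  by_cases ha : a = u <;> by_cases hb : b = u
  · simp [ha, hb]
  · simp [ha, hb, hN]
  · simp [ha, hb, ← hN, adj_comm]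
  · simp [ha, hb]

end SimpleGraph

theorem stmt2_general {V : Type*} [Fintype V] [DecidableEq V] (G : SimpleGraph V) (u v : V)
    (huv : u ≠ v) (htwin : G.neighborSet u = G.neighborSet v) :
    G.bcNum = (G.induce {w : V | w ≠ u}).bcNum := by
  have hG := G.comap_retractTo_induce_of_neighborSet_eq huv.symm htwin
  unfold SimpleGraph.bcNum
  congr 1
  ext m
  exact ⟨SimpleGraph.exists_isBicliquePartition_comap Subtype.val,
    fun h => hG ▸ SimpleGraph.exists_isBicliquePartition_comap _ h⟩

/-- If `u` and `v` are twins in `G` (distinct vertices with the same neighborhood,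
hence non-adjacent), then `bc(G) = bc(G - u)`. -/
theorem stmt2 {V : Type*} [Fintype V] [DecidableEq V] (G : SimpleGraph V) (u v : V)
    (huv : u ≠ v) (hadj : ¬ G.Adj u v) (htwin : G.neighborSet u = G.neighborSet v) :
    G.bcNum = (G.induce {w : V | w ≠ u}).bcNum :=
  stmt2_general G u v huv htwin
end

section
/- If G is a twin-free finite simple graph whose edge set can be partitioned into r edge-disjoint complete bipartite subgraphs, then G has at most 2^{r+1} − 1 vertices. -/
open Finset
open scoped symmDiff

theorem Finset.card_le_two_of_card_symmDiff_le_one {α : Type*} [DecidableEq α]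
    (𝒯 : Finset (Finset α)) (h𝒯 : ∀ s ∈ 𝒯, ∀ t ∈ 𝒯, #(s ∆ t) ≤ 1) : #𝒯 ≤ 2 := by
  by_contra! hcard
  obtain ⟨s, t, u, hs, ht, hu, hst, hsu, htu⟩ := two_lt_card_iff.mp hcard
  obtain ⟨i, hi⟩ := card_eq_one.mp <|
    (h𝒯 s hs t ht).antisymm (card_pos.mpr (symmDiff_nonempty.mpr hst))
  obtain ⟨j, hj⟩ := card_eq_one.mp <|
    (h𝒯 t ht u hu).antisymm (card_pos.mpr (symmDiff_nonempty.mpr htu))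
  have hsu' : s ∆ u = {i} ∆ {j} := by
    rw [← hi, ← hj, symmDiff_assoc, symmDiff_symmDiff_cancel_left]
  have hij : i ≠ j := by
    rintro rfl
    exact hsu (symmDiff_eq_empty.mp (by rw [hsu', symmDiff_self, bot_eq_empty]))
  have hsu_card := h𝒯 s hs u hu
  rw [hsu', symmDiff_eq_union (disjoint_singleton.mpr hij), ← insert_eq, card_pair hij]
    at hsu_card
  omega

namespace SimpleGraph.IsBicliquePartition

variable {V : Type*} {m : ℕ}

def Separates (A B : Fin m → Finset V) (i : Fin m) (u v : V) : Prop :=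
  u ∈ A i ∧ v ∈ B i ∨ v ∈ A i ∧ u ∈ B i

section

variable {G : SimpleGraph V} {A B : Fin m → Finset V} (hP : G.IsBicliquePartition A B)
include hP

theorem adj_iff_exists_separates {u v : V} : G.Adj u v ↔ ∃ i, Separates A B i u v := by
  refine ⟨fun huv => ?_, ?_⟩
  · obtain ⟨i, ⟨a, ha, b, hb, he⟩, -⟩ := hP.2.2 s(u, v) huv
    rcases Sym2.eq_iff.mp he with ⟨rfl, rfl⟩ | ⟨rfl, rfl⟩
    exacts [⟨i, .inl ⟨ha, hb⟩⟩, ⟨i, .inr ⟨ha, hb⟩⟩]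
  · rintro ⟨i, ⟨hu, hv⟩ | ⟨hv, hu⟩⟩
    exacts [hP.2.1 i u hu v hv, (hP.2.1 i v hv u hu).symm]

theorem eq_of_separates {i j : Fin m} {u v : V} (hi : Separates A B i u v)
    (hj : Separates A B j u v) : i = j := by
  have key : ∀ k, Separates A B k u v → ∃ a ∈ A k, ∃ b ∈ B k, s(u, v) = s(a, b) := by
    rintro k (⟨hu, hv⟩ | ⟨hv, hu⟩)
    exacts [⟨u, hu, v, hv, rfl⟩, ⟨v, hv, u, hu, Sym2.eq_swap⟩]
  have huv : s(u, v) ∈ G.edgeSet := (hP.adj_iff_exists_separates).mpr ⟨i, hi⟩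
  exact (hP.2.2 _ huv).unique (key i hi) (key j hj)

end

variable [DecidableEq V]

def leftIndices (A : Fin m → Finset V) (u : V) : Finset (Fin m) := {i | u ∈ A i}

def support (A B : Fin m → Finset V) (u : V) : Finset (Fin m) := {i | u ∈ A i ∨ u ∈ B i}

@[simp]
theorem mem_leftIndices {A : Fin m → Finset V} {u : V} {i : Fin m} :
    i ∈ leftIndices A u ↔ u ∈ A i := by
  simp [leftIndices]

@[simp]
theorem mem_support {A B : Fin m → Finset V} {u : V} {i : Fin m} :
    i ∈ support A B u ↔ u ∈ A i ∨ u ∈ B i := by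
  simp [support]

theorem leftIndices_subset_support {A B : Fin m → Finset V} {u : V} :
    leftIndices A u ⊆ support A B u := fun _ hi =>
  mem_support.mpr (.inl (mem_leftIndices.mp hi))

variable {G : SimpleGraph V} {A B : Fin m → Finset V} (hP : G.IsBicliquePartition A B)
include hP

theorem mem_right_iff {u : V} {i : Fin m} :
    u ∈ B i ↔ i ∈ support A B u ∧ u ∉ A i := by
  have hdisj : u ∈ A i → u ∉ B i := fun h => Finset.disjoint_left.mp (hP.1 i) h
  rw [mem_support]
  tauto

theorem separates_of_mem_symmDiff {u v : V} (hs : support A B u = support A B v) {i : Fin m}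
    (hi : i ∈ leftIndices A u ∆ leftIndices A v) : Separates A B i u v := by
  rw [Separates, hP.mem_right_iff, hP.mem_right_iff, ← hs]
  rw [mem_symmDiff, mem_leftIndices, mem_leftIndices] at hi
  rcases hi with ⟨hu, hv⟩ | ⟨hv, hu⟩
  · exact .inl ⟨hu, mem_support.mpr (.inl hu), hv⟩
  · exact .inr ⟨hv, hs ▸ mem_support.mpr (.inl hv), hu⟩

theorem card_symmDiff_leftIndices_le_one {u v : V} (hs : support A B u = support A B v) :
    #(leftIndices A u ∆ leftIndices A v) ≤ 1 :=
  card_le_one.mpr fun _ hi _ hj =>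
    hP.eq_of_separates (hP.separates_of_mem_symmDiff hs hi) (hP.separates_of_mem_symmDiff hs hj)

theorem neighborSet_eq_of_leftIndices_eq {u v : V} (hs : support A B u = support A B v)
    (hl : leftIndices A u = leftIndices A v) : G.neighborSet u = G.neighborSet v := by
  ext w
  simp only [mem_neighborSet, hP.adj_iff_exists_separates, Separates, hP.mem_right_iff,
    ← mem_leftIndices, hs, hl]

theorem injOn_leftIndices (htf : Function.Injective G.neighborSet) (S : Finset (Fin m)) :
    Set.InjOn (leftIndices A) {u | support A B u = S} := fun _ hu _ hv hl =>
  htf (hP.neighborSet_eq_of_leftIndices_eq (hu.trans hv.symm) hl)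

variable [Fintype V]

theorem card_filter_support_eq_le_two (htf : Function.Injective G.neighborSet)
    (S : Finset (Fin m)) : #{u | support A B u = S} ≤ 2 := by
  rw [← card_image_of_injOn (by simpa using hP.injOn_leftIndices htf S)]
  refine card_le_two_of_card_symmDiff_le_one _ ?_
  simp only [mem_image, mem_filter, mem_univ, true_and]
  rintro _ ⟨u, hu, rfl⟩ _ ⟨v, hv, rfl⟩
  exact hP.card_symmDiff_leftIndices_le_one (hu.trans hv.symm)

theorem card_filter_support_eq_empty_le_one (htf : Function.Injective G.neighborSet) :
    #{u | support A B u = ∅} ≤ 1 := by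
  rw [← card_image_of_injOn (by simpa using hP.injOn_leftIndices htf ∅)]
  refine card_le_one.mpr ?_
  simp only [mem_image, mem_filter, mem_univ, true_and]
  rintro _ ⟨u, hu, rfl⟩ _ ⟨v, hv, rfl⟩
  have hempty : ∀ w, support A B w = ∅ → leftIndices A w = ∅ := fun w hw =>
    subset_empty.mp (hw ▸ leftIndices_subset_support)
  rw [hempty u hu, hempty v hv]

end SimpleGraph.IsBicliquePartition

open SimpleGraph.IsBicliquePartition

/-- A twin-free graph whose edges admit a biclique partition into `r` parts
has at most `2^(r+1) - 1` vertices. -/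
theorem stmt3 {V : Type*} [Fintype V] (G : SimpleGraph V)
    (htf : ∀ x y : V, G.neighborSet x = G.neighborSet y → x = y)
    (r : ℕ) (A B : Fin r → Finset V) (hpart : G.IsBicliquePartition A B) :
    Fintype.card V ≤ 2 ^ (r + 1) - 1 := by
  classical
  have htf' : Function.Injective G.neighborSet := fun x y => htf x y
  calc Fintype.card V = ∑ S : Finset (Fin r), #{u | support A B u = S} :=
        card_eq_sum_card_fiberwise fun _ _ => mem_univ _
    _ = #{u | support A B u = ∅} + ∑ S ∈ univ.erase ∅, #{u | support A B u = S} :=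
        (add_sum_erase _ _ (mem_univ _)).symm
    _ ≤ 1 + ∑ _S ∈ univ.erase (∅ : Finset (Fin r)), 2 := by
        gcongr with S
        exacts [hpart.card_filter_support_eq_empty_le_one htf',
          hpart.card_filter_support_eq_le_two htf' S]
    _ = 2 ^ (r + 1) - 1 := by
        rw [sum_const, card_erase_of_mem (mem_univ _), card_univ, Fintype.card_finset,
          Fintype.card_fin, smul_eq_mul, pow_succ]
        have := Nat.one_le_two_pow (n := r)
        omega
end

section
/- For every r ≥ 0 there exists a twin-free graph G on exactly 2^{r+1} − 1 vertices whose edge set can be partitioned into r edge-disjoint complete bipartite subgraphs. -/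
namespace SimpleGraph

def zeroOneGraph (ι : Type*) : SimpleGraph (ι → Fin 3) where
  Adj x y := ∃ i, s(x i, y i) = s(0, 1)
  symm := ⟨fun _ _ ⟨i, h⟩ => ⟨i, Sym2.eq_swap.trans h⟩⟩
  loopless := ⟨fun _ ⟨_, h⟩ => by rw [Sym2.eq_iff] at h; grind⟩

variable {ι : Type*}

@[simp]
theorem zeroOneGraph_adj {x y : ι → Fin 3} :
    (zeroOneGraph ι).Adj x y ↔ ∃ i, s(x i, y i) = s(0, 1) := .rfl

theorem zeroOneGraph_adj_update_two [DecidableEq ι] {x : ι → Fin 3} {p : ι} {a : Fin 3} :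
    (zeroOneGraph ι).Adj x (Function.update (fun _ => 2) p a) ↔ s(x p, a) = s(0, 1) := by
  rw [zeroOneGraph_adj]
  refine ⟨fun ⟨i, hi⟩ => ?_, fun h => ⟨p, by rwa [Function.update_self]⟩⟩
  obtain rfl | hip := eq_or_ne i p
  · rwa [Function.update_self] at hi
  · rw [Function.update_of_ne hip, Sym2.eq_iff] at hi
    grind

theorem eq_of_forall_sym2_eq_zero_one_iff {b c : Fin 3}
    (h : ∀ a, s(b, a) = s(0, 1) ↔ s(c, a) = s(0, 1)) : b = c := by
  have h0 := h 0
  have h1 := h 1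
  revert b c
  decide

theorem induce_zeroOneGraph_neighborSet_injective [DecidableEq ι] {S : Set (ι → Fin 3)}
    (hS : ∀ p a, Function.update (fun _ => 2) p a ∈ S) :
    Function.Injective ((zeroOneGraph ι).induce S).neighborSet := by
  intro x y hxy
  refine Subtype.ext <| funext fun p => eq_of_forall_sym2_eq_zero_one_iff fun a => ?_
  simpa only [mem_neighborSet, induce_adj, zeroOneGraph_adj_update_two] using
    Set.ext_iff.1 hxy ⟨_, hS p a⟩

theorem isBicliquePartition_induce_zeroOneGraph {m : ℕ} {S : Set (Fin m → Fin 3)} [Fintype S]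
    (hS : ∀ x ∈ S, ∀ y ∈ S, ∀ i j, s(x i, y i) = s(0, 1) → s(x j, y j) = s(0, 1) → i = j) :
    ((zeroOneGraph (Fin m)).induce S).IsBicliquePartition
      (fun i => {x | x.1 i = 0}) (fun i => {x | x.1 i = 1}) := by
  simp only [IsBicliquePartition, Finset.disjoint_left, Finset.mem_filter, Finset.mem_univ,
    true_and]
  refine ⟨fun i x hx0 hx1 => ?_, fun i a ha b hb => ⟨i, by simp [ha, hb]⟩, fun e he => ?_⟩
  · exact absurd (hx0.symm.trans hx1) (by decide)
  induction e using Sym2.ind with | h x y => ?_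
  obtain ⟨i, hi⟩ := he
  refine ⟨i, ?_, fun j ⟨a, ha, b, hb, hab⟩ => hS _ x.2 _ y.2 _ _ ?_ hi⟩
  · rcases Sym2.eq_iff.1 hi with ⟨hx, hy⟩ | ⟨hx, hy⟩
    · exact ⟨x, hx, y, hy, rfl⟩
    · exact ⟨y, hy, x, hx, Sym2.eq_swap⟩
  · simpa [ha, hb] using congrArg (Sym2.map fun v : S => v.1 j) hab

end SimpleGraph

/-- The paper's vertex set `V ⊆ {0,1,2}^r`; the condition forces at most one `1`. -/
def staircase (r : ℕ) : Set (Fin r → Fin 3) := {x | ∀ i j, x i = 1 → i < j → x j = 2}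

section staircase

variable {r : ℕ}

theorem le_of_mem_staircase_of_eq_one {x : Fin r → Fin 3} {i j : Fin r} (hx : x ∈ staircase r)
    (hi : x i = 1) (hj : x j ≠ 2) : j ≤ i :=
  not_lt.1 fun hij => hj (hx i j hi hij)

theorem le_of_mem_staircase_of_sym2_eq_zero_one {x y : Fin r → Fin 3} {i j : Fin r}
    (hx : x ∈ staircase r) (hy : y ∈ staircase r)
    (hi : s(x i, y i) = s(0, 1)) (hj : s(x j, y j) = s(0, 1)) : j ≤ i := by
  rw [Sym2.eq_iff] at hi hj
  rcases hi with ⟨-, hi⟩ | ⟨hi, -⟩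
  · exact le_of_mem_staircase_of_eq_one hy hi (by rcases hj with ⟨-, h⟩ | ⟨-, h⟩ <;> simp [h])
  · exact le_of_mem_staircase_of_eq_one hx hi (by rcases hj with ⟨h, -⟩ | ⟨h, -⟩ <;> simp [h])

theorem update_two_mem_staircase (p : Fin r) (a : Fin 3) :
    Function.update (fun _ => 2) p a ∈ staircase r := by
  intro i j hi hij
  obtain rfl : i = p := by
    by_contra hip
    simp [Function.update_of_ne hip] at hi
  exact Function.update_of_ne hij.ne' _ _

theorem cons_mem_staircase_iff {a : Fin 3} {y : Fin r → Fin 3} :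
    (Fin.cons a y : Fin (r + 1) → Fin 3) ∈ staircase (r + 1) ↔
      (a = 1 → ∀ j, y j = 2) ∧ y ∈ staircase r := by
  simp [staircase, Fin.forall_fin_succ, Fin.succ_pos, imp_forall_iff]

theorem card_staircase_succ :
    Nat.card (staircase (r + 1)) = 2 * Nat.card (staircase r) + 1 := by
  let fiber (a : Fin 3) := {y : Fin r → Fin 3 // (a = 1 → ∀ j, y j = 2) ∧ y ∈ staircase r}
  have e : staircase (r + 1) ≃ Σ a, fiber a :=
    ((Fin.consEquiv fun _ => Fin 3).subtypeEquiv fun _ => cons_mem_staircase_iff.symm).symm.trans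
      (Equiv.subtypeProdEquivSigmaSubtype fun a y => (a = 1 → ∀ j, y j = 2) ∧ y ∈ staircase r)
  have card_fiber_one : Nat.card (fiber 1) = 1 :=
    Nat.card_eq_one_iff_exists.2
      ⟨⟨fun _ => 2, fun _ _ => rfl, fun _ _ h => absurd h (by simp)⟩,
        fun y => Subtype.ext (funext (y.2.1 rfl))⟩
  have card_fiber_of_ne_one {a : Fin 3} (ha : a ≠ 1) :
      Nat.card (fiber a) = Nat.card (staircase r) :=
    Nat.card_congr (Equiv.subtypeEquivRight fun _ => by simp [ha])
  rw [Nat.card_congr e, Nat.card_sigma, Fin.sum_univ_three, card_fiber_of_ne_one (by decide),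
    card_fiber_one, card_fiber_of_ne_one (by decide)]
  ring

theorem card_staircase (r : ℕ) : Nat.card (staircase r) = 2 ^ (r + 1) - 1 := by
  induction r with
  | zero =>
    rw [show staircase 0 = Set.univ from Set.eq_univ_of_forall fun _ i => i.elim0]
    simp
  | succ r ih =>
    rw [card_staircase_succ, ih, pow_succ _ (r + 1)]
    have := Nat.one_le_two_pow (n := r + 1)
    omega

end staircase

/-- For every `r` there is a twin-free graph on exactly `2^(r+1) - 1` vertices
whose edge set partitions into `r` bicliques. -/
theorem stmt4 (r : ℕ) :
    ∃ (V : Type) (_ : Fintype V) (G : SimpleGraph V),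
      Fintype.card V = 2 ^ (r + 1) - 1 ∧
      (∀ x y : V, G.neighborSet x = G.neighborSet y → x = y) ∧
      ∃ A B : Fin r → Finset V, G.IsBicliquePartition A B := by
  classical
  refine ⟨staircase r, inferInstance, (SimpleGraph.zeroOneGraph (Fin r)).induce (staircase r),
    ?_, SimpleGraph.induce_zeroOneGraph_neighborSet_injective update_two_mem_staircase,
    _, _, SimpleGraph.isBicliquePartition_induce_zeroOneGraph fun x hx y hy i j hi hj => ?_⟩
  · rw [Fintype.card_eq_nat_card, card_staircase]
  · exact le_antisymm (le_of_mem_staircase_of_sym2_eq_zero_one hx hy hj hi)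
      (le_of_mem_staircase_of_sym2_eq_zero_one hx hy hi hj)
end

section
/- Let G be a twin-free graph with biclique partition E(G) = ∪_{i=1}^r E(A_i, B_i). Assign each vertex u the vector v_u ∈ {0,1,2}^r with (v_u)_i = 1 if u ∈ A_i, 0 if u ∈ B_i, 2 otherwise. Then for every nonempty index set I ⊆ {1,...,r}, the number of vertices u whose vector v_u has {0,1}-coordinates exactly on I is at most 2. -/
theorem Sym2.exists_mem_mem_mk_eq_iff {V : Type*} {A B : Finset V} {x y : V} :
    (∃ a ∈ A, ∃ b ∈ B, s(x, y) = s(a, b)) ↔ (x ∈ A ∧ y ∈ B) ∨ (x ∈ B ∧ y ∈ A) := by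
  constructor
  · rintro ⟨a, ha, b, hb, hab⟩
    rcases Sym2.eq_iff.mp hab with ⟨rfl, rfl⟩ | ⟨rfl, rfl⟩
    exacts [Or.inl ⟨ha, hb⟩, Or.inr ⟨hb, ha⟩]
  · rintro (⟨hx, hy⟩ | ⟨hx, hy⟩)
    exacts [⟨x, hx, y, hy, rfl⟩, ⟨y, hy, x, hx, Sym2.eq_swap⟩]

theorem Function.eq_or_eq_or_eq_of_subsingleton_ne {ι : Type*} {f g h : ι → Bool}
    (hfg : {i | f i ≠ g i}.Subsingleton) (hfh : {i | f i ≠ h i}.Subsingleton)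
    (hgh : {i | g i ≠ h i}.Subsingleton) : f = g ∨ f = h ∨ g = h := by
  by_contra! ⟨hne_fg, hne_fh, hne_gh⟩
  obtain ⟨i, hi⟩ := Function.ne_iff.mp hne_fg
  obtain ⟨j, hj⟩ := Function.ne_iff.mp hne_fh
  by_cases hij : i = j
  · subst hij
    refine hne_gh (funext fun k => ?_)
    by_cases hki : k = i
    · subst hki
      revert hi hj
      cases f k <;> cases g k <;> cases h k <;> simp
    · have hfgk : f k = g k := by_contra fun hk => hki (hfg hk hi)
      have hfhk : f k = h k := by_contra fun hk => hki (hfh hk hj)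
      rw [← hfgk, hfhk]
  · have hfhi : f i = h i := by_contra fun hk => hij (hfh hk hj)
    have hfgj : f j = g j := by_contra fun hk => hij (hfg hi hk)
    have hghi : g i ≠ h i := by rw [← hfhi]; exact Ne.symm hi
    have hghj : g j ≠ h j := by rw [← hfgj]; exact hj
    exact hij (hgh hghi hghj)

theorem Set.ncard_le_two_of_subsingleton_ne {ι : Type*} {T : Set (ι → Bool)}
    (hT : ∀ f ∈ T, ∀ g ∈ T, {i | f i ≠ g i}.Subsingleton) : T.ncard ≤ 2 := by
  by_contra! hlt
  have hfin : T.Finite := Set.finite_of_ncard_pos (by omega)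
  obtain ⟨f, hf, g, hg, h, hh, hfg, hfh, hgh⟩ := (Set.two_lt_ncard hfin).mp hlt
  rcases Function.eq_or_eq_or_eq_of_subsingleton_ne (hT f hf g hg) (hT f hf h hh)
    (hT g hg h hh) with h' | h' | h' <;> contradiction

namespace SimpleGraph.IsBicliquePartition

variable {V : Type*} {G : SimpleGraph V} {m : ℕ} {A B : Fin m → Finset V}

theorem adj_iff (hpart : G.IsBicliquePartition A B) {x y : V} :
    G.Adj x y ↔ ∃ i, (x ∈ A i ∧ y ∈ B i) ∨ (x ∈ B i ∧ y ∈ A i) := by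
  constructor
  · intro hxy
    obtain ⟨i, hi, -⟩ := hpart.2.2 _ (G.mem_edgeSet.mpr hxy)
    exact ⟨i, Sym2.exists_mem_mem_mk_eq_iff.mp hi⟩
  · rintro ⟨i, ⟨hx, hy⟩ | ⟨hx, hy⟩⟩
    exacts [hpart.2.1 i x hx y hy, (hpart.2.1 i y hy x hx).symm]

theorem eq_of_separated (hpart : G.IsBicliquePartition A B) {x y : V} {i j : Fin m}
    (hi : (x ∈ A i ∧ y ∈ B i) ∨ (x ∈ B i ∧ y ∈ A i))
    (hj : (x ∈ A j ∧ y ∈ B j) ∨ (x ∈ B j ∧ y ∈ A j)) : i = j :=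
  (hpart.2.2 _ (G.mem_edgeSet.mpr (hpart.adj_iff.mpr ⟨i, hi⟩))).unique
    (Sym2.exists_mem_mem_mk_eq_iff.mpr hi) (Sym2.exists_mem_mem_mk_eq_iff.mpr hj)

theorem neighborSet_eq (hpart : G.IsBicliquePartition A B) {x y : V}
    (hAB : ∀ i, (x ∈ A i ↔ y ∈ A i) ∧ (x ∈ B i ↔ y ∈ B i)) :
    G.neighborSet x = G.neighborSet y := by
  ext z
  simp only [mem_neighborSet, hpart.adj_iff, hAB]

theorem mem_right_iff_of_mem_left_iff (hpart : G.IsBicliquePartition A B) {x y : V} {i : Fin m}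
    (hxy : (x ∈ A i ∨ x ∈ B i) ↔ (y ∈ A i ∨ y ∈ B i)) (hA : x ∈ A i ↔ y ∈ A i) :
    x ∈ B i ↔ y ∈ B i := by
  have hx : x ∈ A i → x ∉ B i := fun h => Finset.disjoint_left.mp (hpart.1 i) h
  have hy : y ∈ A i → y ∉ B i := fun h => Finset.disjoint_left.mp (hpart.1 i) h
  tauto

end SimpleGraph.IsBicliquePartition

theorem stmt6_general {V : Type*} (G : SimpleGraph V)
    (htf : ∀ x y : V, G.neighborSet x = G.neighborSet y → x = y)
    (r : ℕ) (A B : Fin r → Finset V) (hpart : G.IsBicliquePartition A B)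
    (I : Finset (Fin r)) :
    {u : V | ∀ i : Fin r, (u ∈ A i ∨ u ∈ B i) ↔ i ∈ I}.ncard ≤ 2 := by
  classical
  set S := {u : V | ∀ i : Fin r, (u ∈ A i ∨ u ∈ B i) ↔ i ∈ I}
  let side : V → Fin r → Bool := fun u i => decide (u ∈ A i)
  have hsupp {x y : V} (hx : x ∈ S) (hy : y ∈ S) (i : Fin r) :
      (x ∈ A i ∨ x ∈ B i) ↔ (y ∈ A i ∨ y ∈ B i) := (hx i).trans (hy i).symm
  have hinj : S.InjOn side := by
    intro x hx y hy hside
    refine htf x y (hpart.neighborSet_eq fun i => ?_)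
    have hA : x ∈ A i ↔ y ∈ A i := decide_eq_decide.mp (congrFun hside i)
    exact ⟨hA, hpart.mem_right_iff_of_mem_left_iff (hsupp hx hy i) hA⟩
  have hsep {x y : V} (hx : x ∈ S) (hy : y ∈ S) {i : Fin r} (hi : side x i ≠ side y i) :
      (x ∈ A i ∧ y ∈ B i) ∨ (x ∈ B i ∧ y ∈ A i) := by
    have hA : ¬(x ∈ A i ↔ y ∈ A i) := mt decide_eq_decide.mpr hi
    have hxy := hsupp hx hy i
    tauto
  rw [← hinj.ncard_image]
  refine Set.ncard_le_two_of_subsingleton_ne ?_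
  rintro _ ⟨x, hx, rfl⟩ _ ⟨y, hy, rfl⟩ i hi j hj
  exact hpart.eq_of_separated (hsep hx hy hi) (hsep hx hy hj)

/-- In a twin-free graph with a biclique partition into parts `(A i, B i)`,
for every nonempty index set `I` there are at most two vertices whose set of
`{0,1}`-coordinates (i.e. indices `i` with `u ∈ A i ∪ B i`) is exactly `I`. -/
theorem stmt6 {V : Type*} [Fintype V] (G : SimpleGraph V)
    (htf : ∀ x y : V, G.neighborSet x = G.neighborSet y → x = y)
    (r : ℕ) (A B : Fin r → Finset V) (hpart : G.IsBicliquePartition A B)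
    (I : Finset (Fin r)) (hI : I.Nonempty) :
    {u : V | ∀ i : Fin r, (u ∈ A i ∨ u ∈ B i) ↔ i ∈ I}.ncard ≤ 2 :=
  stmt6_general G htf r A B hpart I
end

section
/- If a graph G on n vertices has an independent set I, and there are pairwise disjoint pairs {a_1,b_1}, ..., {a_t,b_t} of vertices outside I such that the set {a_1,b_1,...,a_t,b_t} is independent in G and for each i the vertices a_i and b_i have the same neighborhood inside I, then bc(G) ≤ n − |I| − t. -/
/-!
Order the vertices outside `I ∪ S`, where `S = ⋃ᵢ {aᵢ, bᵢ}`, linearly, and give each such vertex `v`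
the star of its edges to vertices that lie in `I ∪ S` or below `v`. Since `I` and `S` are
independent, the edges not yet covered join `S` to `I`, and since `aᵢ, bᵢ` have the same
neighbours in `I`, those at `{aᵢ, bᵢ}` form the single biclique `{aᵢ, bᵢ} × (N(aᵢ) ∩ I)`.
This gives `t + (n - |I| - 2t)` bicliques; the argument works for twin classes of any size.
-/

open Finset Function

namespace Function.Injective

variable {ι V : Type*} {a b : ι → V}
    (h : Injective fun p : ι × Bool => if p.2 then a p.1 else b p.1)
include h

theorem pair_ne (i : ι) : a i ≠ b i :=
  h.ne (a₁ := (i, true)) (a₂ := (i, false)) (by simp)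

theorem pairwise_disjoint_pair [DecidableEq V] :
    Pairwise (Disjoint on fun i => ({a i, b i} : Finset V)) := by
  intro i j hij
  have hne : ∀ c d : Bool, (if c then a i else b i) ≠ (if d then a j else b j) :=
    fun c d => h.ne (a₁ := (i, c)) (a₂ := (j, d)) fun e => hij (congrArg Prod.fst e)
  refine Finset.disjoint_left.2 fun {x} hx hx' => ?_
  simp only [mem_insert, mem_singleton] at hx hx'
  rcases hx with rfl | rfl <;> rcases hx' with hx' | hx'
  exacts [hne true true hx', hne true false hx', hne false true hx', hne false false hx']

end Function.Injective

namespace SimpleGraph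

variable {V ι : Type*} {G : SimpleGraph V}

theorem bcNum_le_card_of_cover [Fintype V] [Fintype ι] (A B : ι → Finset V)
    (hadj : ∀ i, ∀ x ∈ A i, ∀ y ∈ B i, G.Adj x y)
    (hcover : ∀ x y, G.Adj x y → ∃ i, x ∈ A i ∧ y ∈ B i ∨ y ∈ A i ∧ x ∈ B i)
    (hunique : ∀ i j x y, x ∈ A i → y ∈ B i →
      x ∈ A j ∧ y ∈ B j ∨ y ∈ A j ∧ x ∈ B j → i = j) :
    G.bcNum ≤ Fintype.card ι := by
  let e := (Fintype.equivFin ι).symm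
  refine Nat.sInf_le ⟨A ∘ e, B ∘ e, fun k => ?_, fun k => hadj (e k), ?_⟩
  · exact Finset.disjoint_left.2 fun {x} hxA hxB => G.irrefl (hadj _ x hxA x hxB)
  · intro s hs
    induction s using Sym2.ind with | _ x y => ?_
    have mem_iff : ∀ i, (∃ u ∈ A i, ∃ v ∈ B i, s(x, y) = s(u, v)) ↔
        x ∈ A i ∧ y ∈ B i ∨ y ∈ A i ∧ x ∈ B i := by
      intro i
      constructor
      · rintro ⟨u, hu, v, hv, huv⟩
        rcases Sym2.eq_iff.1 huv with ⟨rfl, rfl⟩ | ⟨rfl, rfl⟩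
        exacts [.inl ⟨hu, hv⟩, .inr ⟨hu, hv⟩]
      · rintro (⟨hx, hy⟩ | ⟨hy, hx⟩)
        exacts [⟨x, hx, y, hy, rfl⟩, ⟨y, hy, x, hx, Sym2.eq_swap⟩]
    obtain ⟨i, hi⟩ := hcover x y hs
    refine ⟨e.symm i, by simpa using (mem_iff i).2 hi, fun k hk => ?_⟩
    rw [Equiv.eq_symm_apply]
    replace hk := (mem_iff (e k)).1 hk
    rcases hi with ⟨hx, hy⟩ | ⟨hy, hx⟩
    · exact (hunique i (e k) x y hx hy hk).symm
    · exact (hunique i (e k) y x hy hx hk.symm).symm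

section TwinClasses

variable [Fintype V] [Fintype ι] [LinearOrder V] (I : Finset V) (C : ι → Finset V)

def remaining : Finset V := (I ∪ univ.biUnion C)ᶜ

@[simp]
theorem mem_remaining {v : V} : v ∈ remaining I C ↔ v ∉ I ∧ ∀ i, v ∉ C i := by
  simp [remaining]

variable (G) [DecidableRel G.Adj]

/-- The bicliques: `C i` against its neighbourhood in `I`, and for each remaining vertex `v` the star
to its neighbours that are not remaining or smaller than `v`, so that an edge between two remaining
vertices belongs to the star of its larger end. -/
def twinStarLeft : ι ⊕ remaining I C → Finset V :=
  Sum.elim C fun v => {v.1}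

def twinStarRight : ι ⊕ remaining I C → Finset V :=
  Sum.elim (fun i => I.filter fun y => ∃ x ∈ C i, G.Adj x y)
    fun v => univ.filter fun w => G.Adj v w ∧ (w ∈ remaining I C → w < v)

variable {G I C}

@[simp]
theorem mem_twinStarLeft_inl {i : ι} {x : V} : x ∈ twinStarLeft I C (.inl i) ↔ x ∈ C i := .rfl

@[simp]
theorem mem_twinStarLeft_inr {v : remaining I C} {x : V} :
    x ∈ twinStarLeft I C (.inr v) ↔ x = v := mem_singleton

@[simp]
theorem mem_twinStarRight_inl {i : ι} {y : V} :
    y ∈ twinStarRight G I C (.inl i) ↔ y ∈ I ∧ ∃ x ∈ C i, G.Adj x y := mem_filter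

@[simp]
theorem mem_twinStarRight_inr {v : remaining I C} {y : V} :
    y ∈ twinStarRight G I C (.inr v) ↔ G.Adj v y ∧ (y ∈ remaining I C → y < v) := by
  simp [twinStarRight]

theorem twinStar_adj (htwin : ∀ i, ∀ x ∈ C i, ∀ x' ∈ C i, ∀ y ∈ I, G.Adj x y → G.Adj x' y) :
    ∀ j, ∀ x ∈ twinStarLeft I C j, ∀ y ∈ twinStarRight G I C j, G.Adj x y := by
  rintro (i | v) x hx y hy
  · obtain ⟨hyI, x', hx', hx'y⟩ := mem_twinStarRight_inl.1 hy
    exact htwin i x' hx' x hx y hyI hx'y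
  · exact mem_twinStarLeft_inr.1 hx ▸ (mem_twinStarRight_inr.1 hy).1

theorem exists_twinStar_of_adj (hI : G.IsIndepSet I) (hS : G.IsIndepSet (⋃ i, (C i : Set V)))
    {x y : V} (h : G.Adj x y) :
    ∃ j, x ∈ twinStarLeft I C j ∧ y ∈ twinStarRight G I C j ∨
      y ∈ twinStarLeft I C j ∧ x ∈ twinStarRight G I C j := by
  by_cases hx : x ∈ remaining I C <;> by_cases hy : y ∈ remaining I C
  · rcases lt_trichotomy x y with hlt | rfl | hgt
    · exact ⟨.inr ⟨y, hy⟩, .inr (by simp [h.symm, hlt])⟩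
    · exact absurd h G.irrefl
    · exact ⟨.inr ⟨x, hx⟩, .inl (by simp [h, hgt])⟩
  · exact ⟨.inr ⟨x, hx⟩, .inl (by simp [h, hy])⟩
  · exact ⟨.inr ⟨y, hy⟩, .inr (by simp [h.symm, hx])⟩
  · simp only [mem_remaining, not_and_or, not_not, not_forall] at hx hy
    rcases hx with hxI | ⟨i, hxi⟩ <;> rcases hy with hyI | ⟨k, hyk⟩
    · exact absurd h (hI hxI hyI (G.ne_of_adj h))
    · exact ⟨.inl k, .inr ⟨hyk, mem_twinStarRight_inl.2 ⟨hxI, y, hyk, h.symm⟩⟩⟩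
    · exact ⟨.inl i, .inl ⟨hxi, mem_twinStarRight_inl.2 ⟨hyI, x, hxi, h⟩⟩⟩
    · exact absurd h (hS (Set.mem_iUnion_of_mem i hxi) (Set.mem_iUnion_of_mem k hyk)
        (G.ne_of_adj h))

theorem twinStar_unique (hC : Pairwise (Disjoint on C)) (hCI : ∀ i, Disjoint (C i) I)
    (j k : ι ⊕ remaining I C) (x y : V)
    (hx : x ∈ twinStarLeft I C j) (hy : y ∈ twinStarRight G I C j)
    (hk : x ∈ twinStarLeft I C k ∧ y ∈ twinStarRight G I C k ∨
      y ∈ twinStarLeft I C k ∧ x ∈ twinStarRight G I C k) : j = k := by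
  rcases j with i | ⟨v, hv⟩ <;> rcases k with i' | ⟨v', hv'⟩ <;>
    simp only [mem_twinStarLeft_inl, mem_twinStarLeft_inr, mem_twinStarRight_inl,
      mem_twinStarRight_inr] at hx hy hk
  · rcases hk with ⟨hx', -⟩ | ⟨hy', -⟩
    · by_contra hne
      exact Finset.disjoint_left.1 (hC fun h => hne (congrArg _ h)) hx hx'
    · exact absurd hy.1 (Finset.disjoint_left.1 (hCI i') hy')
  · rcases hk with ⟨rfl, -⟩ | ⟨rfl, -⟩
    · exact absurd hx (((mem_remaining I C).1 hv').2 i)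
    · exact absurd hy.1 ((mem_remaining I C).1 hv').1
  · subst hx
    rcases hk with ⟨hx', -⟩ | ⟨-, hx', -⟩
    · exact absurd hx' (((mem_remaining I C).1 hv).2 i')
    · exact absurd hx' ((mem_remaining I C).1 hv).1
  · subst hx
    rcases hk with ⟨rfl, -⟩ | ⟨rfl, -, hlt⟩
    · rfl
    · exact absurd (hy.2 hv') (not_lt.2 (hlt hv).le)

omit [DecidableRel G.Adj] in
theorem bcNum_le_card_add_card_remaining (hI : G.IsIndepSet I)
    (hS : G.IsIndepSet (⋃ i, (C i : Set V))) (hC : Pairwise (Disjoint on C))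
    (hCI : ∀ i, Disjoint (C i) I)
    (htwin : ∀ i, ∀ x ∈ C i, ∀ x' ∈ C i, ∀ y ∈ I, G.Adj x y → G.Adj x' y) :
    G.bcNum ≤ Fintype.card ι + #(remaining I C) := by
  classical
  have := bcNum_le_card_of_cover _ _ (twinStar_adj htwin)
    (fun _ _ => exists_twinStar_of_adj hI hS) (twinStar_unique hC hCI)
  rwa [Fintype.card_sum, Fintype.card_coe] at this

theorem card_remaining_add (hC : Pairwise (Disjoint on C)) (hCI : ∀ i, Disjoint (C i) I) :
    #(remaining I C) + #I + ∑ i, #(C i) = Fintype.card V := by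
  have hdisj : Disjoint I (univ.biUnion C) :=
    (disjoint_biUnion_right _ _ _).2 fun i _ => (hCI i).symm
  have hcard := card_union_of_disjoint hdisj
  rw [card_biUnion fun i _ j _ hij => hC hij] at hcard
  have := card_le_univ (I ∪ univ.biUnion C)
  rw [remaining, card_compl]
  omega

end TwinClasses

end SimpleGraph

open SimpleGraph in
theorem stmt13_general {V : Type*} [Fintype V] (G : SimpleGraph V)
    (I : Finset V) (hI : (↑I : Set V).Pairwise (fun x y => ¬ G.Adj x y))
    (t : ℕ) (a b : Fin t → V)
    (hdistinct : Function.Injective (fun p : Fin t × Bool => if p.2 then a p.1 else b p.1))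
    (houtside : ∀ i, a i ∉ I ∧ b i ∉ I)
    (hindep : ∀ i j, ∀ x ∈ ({a i, b i} : Set V), ∀ y ∈ ({a j, b j} : Set V),
      ¬ G.Adj x y)
    (hsame : ∀ i, ∀ x ∈ I, G.Adj (a i) x ↔ G.Adj (b i) x) :
    G.bcNum ≤ Fintype.card V - I.card - t := by
  let _ : LinearOrder V := LinearOrder.lift' _ (Fintype.equivFin V).injective
  let C : Fin t → Finset V := fun i => {a i, b i}
  have hC : Pairwise (Disjoint on C) := hdistinct.pairwise_disjoint_pair
  have hCI : ∀ i, Disjoint (C i) I := fun i => by simp [C, houtside i]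
  have hS : G.IsIndepSet (⋃ i, (C i : Set V)) := by
    intro x hx y hy _
    obtain ⟨i, hi⟩ := Set.mem_iUnion.1 hx
    obtain ⟨j, hj⟩ := Set.mem_iUnion.1 hy
    exact hindep i j x (by simpa [C] using hi) y (by simpa [C] using hj)
  have htwin : ∀ i, ∀ x ∈ C i, ∀ x' ∈ C i, ∀ y ∈ I, G.Adj x y → G.Adj x' y := by
    intro i x hx x' hx' y hy
    have := hsame i y hy
    simp only [C, mem_insert, mem_singleton] at hx hx'
    rcases hx with rfl | rfl <;> rcases hx' with rfl | rfl <;> tauto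
  have hcard : ∑ i, #(C i) = 2 * t := by
    simp [C, card_pair (hdistinct.pair_ne _), mul_comm]
  have hbound := bcNum_le_card_add_card_remaining hI hS hC hCI htwin
  have hsum := card_remaining_add hC hCI
  rw [Fintype.card_fin] at hbound
  omega

/-- If `I` is independent and `a 1,b 1,...,a t,b t` are distinct vertices outside
`I` forming an independent set, with `a i` and `b i` having the same neighborhood
inside `I` for each `i`, then `bc(G) ≤ n - |I| - t`. -/
theorem stmt13 {V : Type*} [Fintype V] [DecidableEq V] (G : SimpleGraph V)
    (I : Finset V) (hI : (↑I : Set V).Pairwise (fun x y => ¬ G.Adj x y))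
    (t : ℕ) (a b : Fin t → V)
    (hdistinct : Function.Injective (fun p : Fin t × Bool => if p.2 then a p.1 else b p.1))
    (houtside : ∀ i, a i ∉ I ∧ b i ∉ I)
    (hindep : ∀ i j, ∀ x ∈ ({a i, b i} : Set V), ∀ y ∈ ({a j, b j} : Set V),
      ¬ G.Adj x y)
    (hsame : ∀ i, ∀ x ∈ I, G.Adj (a i) x ↔ G.Adj (b i) x) :
    G.bcNum ≤ Fintype.card V - I.card - t :=
  stmt13_general G I hI t a b hdistinct houtside hindep hsame
end

section
/- For 2 ≤ i ≤ 0.9k, k ≤ 2.04·log₂ n, and n sufficiently large, the ratio [C(k,i)·C(n−k, k−i) / C(n,k)] · 2^{i(i−1)/2} is at most n^{−0.05 i}. -/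
/-!
Writing `L = log₂ n`, the ratio `C(k,i)·C(n-k,k-i)/C(n,k)` is at most `(k²/(n-k+1))^i`, and
`2^{i(i-1)/2} = (2^{(i-1)/2})^i`, so the whole term is the `i`-th power of
`k² · 2^{(i-1)/2} / (n-k+1)`. Since `k ≤ 2.04 L` and `i ≤ 0.9 k`, we have `n - k + 1 ≥ n/2`,
`2k² ≤ 8.3232 L² ≤ n^{0.032}` and `2^{(i-1)/2} ≤ 2^{0.918 L} = n^{0.918}`, so this base is at most
`n^{0.95 - 1} = n^{-0.05}`.
-/

open Real Filter

theorem Nat.choose_sub_mul_pow_le {n k i : ℕ} (hik : i ≤ k) (hkn : k ≤ n) :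
    n.choose (k - i) * (n - k + 1) ^ i ≤ n.choose k * k ^ i := by
  induction i with
  | zero => simp
  | succ i ih =>
    have hstep : n.choose (k - (i + 1)) * (n - k + 1) ≤ n.choose (k - i) * k :=
      calc n.choose (k - (i + 1)) * (n - k + 1)
          ≤ n.choose (k - (i + 1)) * (n - (k - (i + 1))) := by gcongr; omega
        _ = n.choose (k - i) * (k - i) := by
          rw [← Nat.choose_succ_right_eq, show k - (i + 1) + 1 = k - i by omega]
        _ ≤ n.choose (k - i) * k := by gcongr; omega
    calc n.choose (k - (i + 1)) * (n - k + 1) ^ (i + 1)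
        = n.choose (k - (i + 1)) * (n - k + 1) * (n - k + 1) ^ i := by ring
      _ ≤ n.choose (k - i) * k * (n - k + 1) ^ i := Nat.mul_le_mul_right _ hstep
      _ = n.choose (k - i) * (n - k + 1) ^ i * k := by ring
      _ ≤ n.choose k * k ^ i * k := Nat.mul_le_mul_right _ (ih (by omega))
      _ = n.choose k * k ^ (i + 1) := by ring

theorem choose_mul_choose_div_choose_le {n k i : ℕ} (hik : i ≤ k) (hkn : k ≤ n) :
    (k.choose i * (n - k).choose (k - i) / n.choose k : ℝ) ≤ ((k : ℝ) ^ 2 / (n - k + 1)) ^ i := by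
  have hnat : k.choose i * (n - k).choose (k - i) * (n - k + 1) ^ i ≤ n.choose k * (k ^ 2) ^ i :=
    calc k.choose i * (n - k).choose (k - i) * (n - k + 1) ^ i
        ≤ k ^ i * (n.choose (k - i) * (n - k + 1) ^ i) := by
          rw [mul_assoc]
          exact Nat.mul_le_mul (Nat.choose_le_pow k i)
            (Nat.mul_le_mul_right _ (Nat.choose_le_choose _ (Nat.sub_le n k)))
      _ ≤ k ^ i * (n.choose k * k ^ i) := Nat.mul_le_mul_left _ (Nat.choose_sub_mul_pow_le hik hkn)
      _ = n.choose k * (k ^ 2) ^ i := by ring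
  have hden : (0 : ℝ) < n - k + 1 := by
    have : (k : ℝ) ≤ n := by exact_mod_cast hkn
    linarith
  rw [div_pow, div_le_div_iff₀ (by exact_mod_cast Nat.choose_pos hkn) (pow_pos hden i)]
  have hreal := (Nat.cast_le (α := ℝ)).mpr hnat
  push_cast [Nat.cast_sub hkn] at hreal
  linarith

theorem eventually_const_mul_logb_pow_le_rpow (b c : ℝ) (m : ℕ) {ε : ℝ} (hε : 0 < ε) :
    ∀ᶠ x : ℝ in atTop, c * logb b x ^ m ≤ x ^ ε := by
  have h := ((isLittleO_log_rpow_rpow_atTop m hε).const_mul_left (c / log b ^ m)).eventuallyLE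
  filter_upwards [h, eventually_gt_atTop 0] with x hx hx0
  rw [rpow_natCast, Real.norm_of_nonneg (rpow_nonneg hx0.le ε)] at hx
  calc c * logb b x ^ m = c / log b ^ m * log x ^ m := by rw [logb, div_pow]; ring
    _ ≤ x ^ ε := (le_abs_self _).trans hx

theorem rpow_le_rpow_of_le_mul_logb {b x t a : ℝ} (hb : 1 < b) (hx : 0 < x)
    (h : t ≤ a * logb b x) : b ^ t ≤ x ^ a := by
  calc b ^ t ≤ b ^ (logb b x * a) := rpow_le_rpow_of_exponent_le hb.le (by linarith)
    _ = x ^ a := by rw [rpow_mul (by linarith), rpow_logb (by linarith) hb.ne' hx]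

theorem two_pow_mul_pred_div_two (i : ℕ) :
    (2 : ℝ) ^ (i * (i - 1) / 2) = ((2 : ℝ) ^ (((i : ℝ) - 1) / 2)) ^ i := by
  rw [← rpow_natCast, ← rpow_natCast, ← rpow_mul zero_le_two,
    Nat.cast_div (Nat.even_mul_pred_self i).two_dvd two_ne_zero]
  rcases i with _ | i
  · simp
  · push_cast; ring_nf

theorem choose_mul_choose_div_choose_mul_two_pow_le {n k i : ℕ} (hik : i ≤ k) (hkn : k ≤ n) :
    (k.choose i * (n - k).choose (k - i) / n.choose k : ℝ) * 2 ^ (i * (i - 1) / 2)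
      ≤ ((k : ℝ) ^ 2 * 2 ^ (((i : ℝ) - 1) / 2) / (n - k + 1)) ^ i := by
  calc (k.choose i * (n - k).choose (k - i) / n.choose k : ℝ) * 2 ^ (i * (i - 1) / 2)
      ≤ ((k : ℝ) ^ 2 / (n - k + 1)) ^ i * (2 ^ (((i : ℝ) - 1) / 2)) ^ i := by
        rw [two_pow_mul_pred_div_two]
        gcongr
        exact choose_mul_choose_div_choose_le hik hkn
    _ = _ := by rw [← mul_pow, div_mul_eq_mul_div]

theorem sq_mul_two_rpow_div_le_rpow {n k t : ℝ} (hn : 0 < n) (hk : 0 ≤ k)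
    (ht : t ≤ 0.9 * k) (hkn : k ≤ 2.04 * logb 2 n) (hlog : 4.08 * logb 2 n ≤ n)
    (hlog_sq : 8.3232 * logb 2 n ^ 2 ≤ n ^ (0.032 : ℝ)) :
    k ^ 2 * 2 ^ ((t - 1) / 2) / (n - k + 1) ≤ n ^ (-0.05 : ℝ) := by
  have hk_sq : 2 * k ^ 2 ≤ n ^ (0.032 : ℝ) := by nlinarith
  have htwo : (2 : ℝ) ^ ((t - 1) / 2) ≤ n ^ (0.918 : ℝ) :=
    rpow_le_rpow_of_le_mul_logb one_lt_two hn (by linarith)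
  calc k ^ 2 * 2 ^ ((t - 1) / 2) / (n - k + 1)
      ≤ k ^ 2 * 2 ^ ((t - 1) / 2) / (n / 2) := by gcongr; linarith
    _ = 2 * k ^ 2 * 2 ^ ((t - 1) / 2) / n := by ring
    _ ≤ n ^ (0.032 : ℝ) * n ^ (0.918 : ℝ) / n := by gcongr
    _ = n ^ (-0.05 : ℝ) := by rw [← rpow_add hn, ← rpow_sub_one hn.ne']; norm_num

/-- Second-moment estimate: for `2 ≤ i ≤ 0.9k`, `k ≤ 2.04 log₂ n` and `n`
sufficiently large,
`(C(k,i)·C(n-k,k-i)/C(n,k)) · 2^{i(i-1)/2} ≤ n^{-0.05 i}`. -/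
theorem stmt16 :
    ∃ N : ℕ, ∀ n : ℕ, N ≤ n → ∀ k i : ℕ,
      2 ≤ i → (i : ℝ) ≤ 0.9 * (k : ℝ) → (k : ℝ) ≤ 2.04 * Real.logb 2 (n : ℝ) →
      ((k.choose i : ℝ) * ((n - k).choose (k - i) : ℝ) / (n.choose k : ℝ))
          * 2 ^ (i * (i - 1) / 2)
        ≤ (n : ℝ) ^ (-(0.05) * (i : ℝ)) := by
  have hlog := eventually_const_mul_logb_pow_le_rpow 2 4.08 1 one_pos
  have hlog_sq := eventually_const_mul_logb_pow_le_rpow 2 8.3232 2 (by norm_num : (0 : ℝ) < 0.032)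
  obtain ⟨N, hN⟩ := eventually_atTop.mp
    ((tendsto_natCast_atTop_atTop.eventually (hlog.and hlog_sq)).and (eventually_ge_atTop 1))
  refine ⟨N, fun n hN_le k i _ hi hkn => ?_⟩
  obtain ⟨⟨hlog, hlog_sq⟩, hn_one⟩ := hN n hN_le
  rw [pow_one, rpow_one] at hlog
  have hn : (1 : ℝ) ≤ n := by exact_mod_cast hn_one
  have hik : i ≤ k := by exact_mod_cast (show (i : ℝ) ≤ k by linarith [k.cast_nonneg (α := ℝ)])
  have hkn_real : (k : ℝ) ≤ n := by linarith [logb_nonneg one_lt_two hn]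
  calc _ ≤ ((k : ℝ) ^ 2 * 2 ^ (((i : ℝ) - 1) / 2) / (n - k + 1)) ^ i :=
        choose_mul_choose_div_choose_mul_two_pow_le hik (by exact_mod_cast hkn_real)
    _ ≤ ((n : ℝ) ^ (-0.05 : ℝ)) ^ i :=
        pow_le_pow_left₀ (div_nonneg (by positivity) (by linarith))
          (sq_mul_two_rpow_div_le_rpow (by linarith) k.cast_nonneg hi hkn hlog hlog_sq) i
    _ = (n : ℝ) ^ (-(0.05) * (i : ℝ)) := by rw [← rpow_natCast, ← rpow_mul (by linarith)]
end
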